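/- arXiv:1809.04010 — 2 statements merged into one kernel-verified Lean document; each statement's English description precedes it below -/
import Mathlib

section
/- Let p be a prime with p − 1 = 12m for some integer m with gcd(m, 6) = 1 that has a prime factor greater than 6, and let p > 4901 (= 70² + 1). Let S be the SLCE almost difference set over 𝔽_p^*. Then the multiplier group of S is trivial: every unit t of ℤ/(p-1)ℤ that is a multiplier of S equals 1. -/
/-- For a prime `p` with `p - 1 = 12m`, `gcd(m,6) = 1`, `m` having a
prime factor greater than `6`, and `p > 4901`, the multiplier group of the SLCE
almost difference set over `𝔽_p^*` is trivial. -/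
theorem slce_multiplier_group_trivial_twelve_m
    (p m : ℕ) (hp : p.Prime) (hm : p - 1 = 12 * m) (hm6 : Nat.gcd m 6 = 1)
    (hfac : ∃ ℓ : ℕ, ℓ.Prime ∧ ℓ ∣ m ∧ 6 < ℓ) (hbig : 4901 < p)
    (S : Set (ZMod p)) (hS : S = {x : ZMod p | x ≠ 0 ∧ ¬ IsSquare (x + 1)})
    (t : (ZMod (p - 1))ˣ)
    (ht : ∃ g : ZMod p, g ≠ 0 ∧
      (fun x : ZMod p => x ^ ((t : ZMod (p - 1)).val)) '' S = (fun s => g * s) '' S) :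
    t = 1 := by
  classical
  haveI : Fact p.Prime := ⟨hp⟩
  haveI : NeZero p := ⟨by omega⟩
  have hp1 : 1 < p := hp.one_lt
  have hm409 : 409 ≤ m := by omega
  set q := 6 * m with hqdef
  have hn2q : (p - 1) = 2 * q := by omega
  have hp2q : p = 2 * q + 1 := by omega
  have hq5 : 5 ≤ q := by omega
  have hqeven : q % 2 = 0 := by omega
  have hqp : q < p := by omega
  have hpdiv2 : p / 2 = q := by omega
  haveI : NeZero (p - 1) := ⟨by omega⟩
  have h1n : 1 < (p - 1) := by omega
  haveI : Fact (1 < (p - 1)) := ⟨h1n⟩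
  -- the exponent t'
  set t' := ((t : ZMod (p - 1))).val with ht'def
  obtain ⟨g, hg0, himg⟩ := ht
  have hcop : Nat.Coprime t' (p - 1) := ZMod.val_coe_unit_coprime t
  have htlt : t' < (p - 1) := ZMod.val_lt _
  have ht0 : t' ≠ 0 := by
    intro h0
    rw [h0] at hcop
    simp only [Nat.coprime_zero_left] at hcop
    omega
  have htodd : t' % 2 = 1 := by
    rcases Nat.mod_two_eq_zero_or_one t' with h2 | h2
    · exfalso
      have h2t : 2 ∣ t' := Nat.dvd_of_mod_eq_zero h2
      have h2n : 2 ∣ (p - 1) := ⟨q, hn2q⟩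
      have hdg := Nat.dvd_gcd h2t h2n
      rw [hcop] at hdg
      omega
    · exact h2
  -- inverse exponent
  set t'' := ((↑(t⁻¹) : ZMod (p - 1))).val with ht''def
  have ht''odd : t'' % 2 = 1 := by
    have hcop' : Nat.Coprime t'' (p - 1) := ZMod.val_coe_unit_coprime t⁻¹
    rcases Nat.mod_two_eq_zero_or_one t'' with h2 | h2
    · exfalso
      have h2t : 2 ∣ t'' := Nat.dvd_of_mod_eq_zero h2
      have h2n : 2 ∣ (p - 1) := ⟨q, hn2q⟩
      have hdg := Nat.dvd_gcd h2t h2n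
      rw [hcop'] at hdg
      omega
    · exact h2
  have ht''lt : t'' < (p - 1) := ZMod.val_lt _
  have hinv : (t' * t'') % (p - 1) = 1 := by
    have h1 : ((t : ZMod (p - 1)) * ((↑(t⁻¹)) : ZMod (p - 1))) = 1 := by
      rw [← Units.val_mul, mul_inv_cancel, Units.val_one]
    have h2 := congrArg ZMod.val h1
    rwa [ZMod.val_mul, ZMod.val_one] at h2
  have hinv' : (t'' * t') % (p - 1) = 1 := by rwa [Nat.mul_comm]
  -- mod-inverse composition
  have hmodinv : ∀ (a b : ℕ), (a * b) % (p - 1) = 1 → ∀ k, k < (p - 1) → ((k * a) % (p - 1) * b) % (p - 1) = k := by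
    intro a b hab k hk
    have h1 : (k * a) % (p - 1) * b ≡ k * a * b [MOD (p - 1)] :=
      Nat.ModEq.mul_right b (Nat.mod_modEq (k * a) (p - 1))
    have h2 : k * (a * b) ≡ k * 1 [MOD (p - 1)] := Nat.ModEq.mul_left k (by
      show a * b % (p - 1) = 1 % (p - 1)
      rw [hab, Nat.mod_eq_of_lt h1n])
    have h3 : (k * a) % (p - 1) * b ≡ k [MOD (p - 1)] := by
      calc (k * a) % (p - 1) * b ≡ k * a * b [MOD (p - 1)] := h1
        _ = k * (a * b) := by ring
        _ ≡ k * 1 [MOD (p - 1)] := h2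
        _ = k := by ring
    calc ((k * a) % (p - 1) * b) % (p - 1) = k % (p - 1) := h3
      _ = k := Nat.mod_eq_of_lt hk
  -- power reduction mod (p - 1)
  have hpow_mod : ∀ (x : ZMod p), x ≠ 0 → ∀ a : ℕ, x ^ a = x ^ (a % (p - 1)) := by
    intro x hx a
    conv_lhs => rw [← Nat.div_add_mod a (p - 1)]
    rw [pow_add, pow_mul, ZMod.pow_card_sub_one_eq_one hx, one_pow, one_mul]
  have hpowinv : ∀ (x : ZMod p), x ≠ 0 → (x ^ t') ^ t'' = x := by
    intro x hx
    rw [← pow_mul, hpow_mod x hx (t' * t''), hinv, pow_one]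
  -- parity of (k*t') % (p - 1)
  have h2n : 2 ∣ (p - 1) := ⟨q, hn2q⟩
  have hparity : ∀ k : ℕ, ((k * t') % (p - 1)) % 2 = k % 2 := by
    intro k
    rw [Nat.mod_mod_of_dvd _ h2n, Nat.mul_mod, htodd, mul_one]
    omega
  have hparity'' : ∀ k : ℕ, ((k * t'') % (p - 1)) % 2 = k % 2 := by
    intro k
    rw [Nat.mod_mod_of_dvd _ h2n, Nat.mul_mod, ht''odd, mul_one]
    omega
  have negpow : ∀ a b : ℕ, a % 2 = b % 2 → ((-1 : ZMod p)) ^ a = (-1) ^ b := by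
    intro a b hab
    conv_lhs => rw [← Nat.div_add_mod a 2]
    conv_rhs => rw [← Nat.div_add_mod b 2]
    rw [pow_add, pow_add, pow_mul, pow_mul, neg_one_sq, one_pow, one_pow, hab]
  -- (k*t') % (p - 1) is nonzero
  have hanz : ∀ k : ℕ, 1 ≤ k → k < (p - 1) → (k * t') % (p - 1) ≠ 0 := by
    intro k h1 h2 h0
    have hd : (p - 1) ∣ k * t' := Nat.dvd_of_mod_eq_zero h0
    have hd2 : (p - 1) ∣ k := (Nat.Coprime.dvd_of_dvd_mul_right (hcop.symm) hd)
    have := Nat.le_of_dvd (by omega) hd2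
    omega
  have hnpos : 0 < (p - 1) := by omega
  -- euler criterion helpers
  have hEuler1 : ∀ v : ZMod p, v ≠ 0 → IsSquare v → v ^ q = 1 := by
    intro v hv hsq
    rw [← hpdiv2]
    exact (ZMod.euler_criterion p hv).mp hsq
  have hEuler2 : ∀ v : ZMod p, v ≠ 0 → ¬ IsSquare v → v ^ q = -1 := by
    intro v hv hnsq
    rcases ZMod.pow_div_two_eq_neg_one_or_one p hv with h1 | h1
    · exact absurd ((ZMod.euler_criterion p hv).mpr h1) hnsq
    · rw [← hpdiv2]; exact h1
  -- the finset S
  set F : Finset (ZMod p) := Finset.univ.filter (fun x => x ∈ S) with hFdef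
  have hmemF : ∀ x : ZMod p, x ∈ F ↔ (x ≠ 0 ∧ ¬ IsSquare (x + 1)) := by
    intro x
    rw [hFdef, Finset.mem_filter, hS]
    simp [Set.mem_setOf_eq]
  have hFsub : F ⊆ Finset.univ.erase 0 := by
    intro x hx
    exact Finset.mem_erase.mpr ⟨((hmemF x).mp hx).1, Finset.mem_univ x⟩
  have hcoeF : (F : Set (ZMod p)) = S := by
    ext x
    simp [hFdef]
  -- power sums
  set P : ℕ → ZMod p := fun k => ∑ x ∈ F, x ^ k with hPdef
  -- binomial shorthand
  set Ck : ℕ → ZMod p := fun a => ((q.choose ((p - 1) - a) : ℕ) : ZMod p) with hCkdef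
  -- sum of powers over nonzero elements
  have hsum : ∀ i : ℕ, (∑ u ∈ Finset.univ.erase (0 : ZMod p), u ^ i)
      = if (p - 1) ∣ i then -1 else 0 := by
    intro i
    have himage : (Finset.univ : Finset (ZMod p)ˣ).image Units.val
        = Finset.univ.erase 0 := by
      ext u
      constructor
      · intro hu
        obtain ⟨x, -, rfl⟩ := Finset.mem_image.mp hu
        exact Finset.mem_erase.mpr ⟨x.ne_zero, Finset.mem_univ _⟩
      · intro hu
        have hu0 : u ≠ 0 := (Finset.mem_erase.mp hu).1
        exact Finset.mem_image.mpr ⟨Units.mk0 u hu0, Finset.mem_univ _, rfl⟩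
    rw [← himage, Finset.sum_image (fun x _ y _ hxy => Units.ext hxy)]
    have hres := FiniteField.sum_pow_units (ZMod p) i
    rw [ZMod.card] at hres
    rw [← hres]
  -- the binomial sum
  have hbinsum : ∀ a : ℕ, 1 ≤ a → a < (p - 1) →
      (∑ u : ZMod p, u ^ a * (u + 1) ^ q) = - Ck a := by
    intro a ha1 han
    have hbin : ∀ u : ZMod p, (u + 1) ^ q
        = ∑ j ∈ Finset.range (q + 1), u ^ j * ((q.choose j : ℕ) : ZMod p) := by
      intro u
      rw [add_pow]
      apply Finset.sum_congr rfl
      intro j _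
      rw [one_pow, mul_one]
    calc (∑ u : ZMod p, u ^ a * (u + 1) ^ q)
        = ∑ u : ZMod p, ∑ j ∈ Finset.range (q + 1),
            u ^ (a + j) * ((q.choose j : ℕ) : ZMod p) := by
          apply Finset.sum_congr rfl
          intro u _
          rw [hbin u, Finset.mul_sum]
          apply Finset.sum_congr rfl
          intro j _
          rw [pow_add]; ring
      _ = ∑ j ∈ Finset.range (q + 1), ∑ u : ZMod p,
            u ^ (a + j) * ((q.choose j : ℕ) : ZMod p) := Finset.sum_comm
      _ = ∑ j ∈ Finset.range (q + 1),
            (if a + j = (p - 1) then -((q.choose j : ℕ) : ZMod p) else 0) := by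
          apply Finset.sum_congr rfl
          intro j hj
          rw [Finset.mem_range] at hj
          rw [← Finset.sum_mul]
          have hz : (∑ u : ZMod p, u ^ (a + j))
              = ∑ u ∈ Finset.univ.erase (0 : ZMod p), u ^ (a + j) := by
            rw [← Finset.sum_erase_add Finset.univ _ (Finset.mem_univ (0 : ZMod p))]
            rw [zero_pow (by omega : a + j ≠ 0), add_zero]
          rw [hz, hsum (a + j)]
          have hiff : (p - 1) ∣ (a + j) ↔ a + j = (p - 1) := by
            constructor
            · intro ⟨c, hc⟩
              rcases Nat.lt_or_ge c 1 with hc1 | hc1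
              · interval_cases c <;> omega
              · rcases Nat.lt_or_ge c 2 with hc2 | hc2
                · interval_cases c <;> omega
                · exfalso
                  have : (p - 1) * 2 ≤ (p - 1) * c := Nat.mul_le_mul_left (p - 1) hc2
                  omega
            · intro hc; exact ⟨1, by omega⟩
          by_cases hcase : a + j = (p - 1)
          · rw [if_pos (hiff.mpr hcase), if_pos hcase]; ring
          · rw [if_neg (fun hd => hcase (hiff.mp hd)), if_neg hcase, zero_mul]
      _ = ∑ j ∈ Finset.range (q + 1),
            (if j = (p - 1) - a then -((q.choose j : ℕ) : ZMod p) else 0) := by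
          apply Finset.sum_congr rfl
          intro j _
          exact if_congr (by omega) rfl rfl
      _ = - Ck a := by
          rw [Finset.sum_ite_eq' (Finset.range (q + 1)) ((p - 1) - a)
            (fun j => -((q.choose j : ℕ) : ZMod p))]
          by_cases hmem : (p - 1) - a ∈ Finset.range (q + 1)
          · rw [if_pos hmem]
          · rw [if_neg hmem]
            simp only [hCkdef]
            rw [Finset.mem_range] at hmem
            rw [Nat.choose_eq_zero_of_lt (by omega)]
            simp
  -- STEP B : power sums of S
  have hSq0 : IsSquare (0 : ZMod p) := ⟨0, (mul_zero 0).symm⟩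
  have hq0 : q ≠ 0 := by omega
  have hneg1ne : (-1 : ZMod p) ≠ 0 := by
    intro hz
    have : (1 : ZMod p) = 0 := by linear_combination -hz
    exact one_ne_zero this
  have stepB : ∀ a : ℕ, 1 ≤ a → a < (p - 1) → (2 : ZMod p) * P a = Ck a - (-1) ^ a := by
    intro a ha1 han
    have hpt : ∀ u ∈ Finset.univ.erase (0 : ZMod p),
        ((1 : ZMod p) - (u + 1) ^ q) * u ^ a
          = (if u ∈ F then 2 * u ^ a else 0)
            + (if u = (-1 : ZMod p) then (-1) ^ a else 0) := by
      intro u hu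
      have hu0 : u ≠ 0 := (Finset.mem_erase.mp hu).1
      by_cases huS : u ∈ F
      · have hx := (hmemF u).mp huS
        have h1 : u + 1 ≠ 0 := fun hz => hx.2 (hz ▸ hSq0)
        have hpow : (u + 1) ^ q = -1 := hEuler2 _ h1 hx.2
        have hune : u ≠ -1 := fun he => h1 (by rw [he]; ring)
        rw [if_pos huS, if_neg hune, hpow]; ring
      · have hsq : IsSquare (u + 1) := by
          by_contra hns
          exact huS ((hmemF u).mpr ⟨hu0, hns⟩)
        by_cases hum : u = -1
        · rw [if_neg huS, if_pos hum, hum]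
          have hz : ((-1 : ZMod p) + 1) = 0 := by ring
          rw [hz, zero_pow hq0]; ring
        · have h1 : u + 1 ≠ 0 := fun hz => hum (by linear_combination hz)
          rw [if_neg huS, if_neg hum, hEuler1 _ h1 hsq]; ring
    have hTsplit : (∑ u ∈ Finset.univ.erase (0 : ZMod p), ((1 : ZMod p) - (u + 1) ^ q) * u ^ a)
        = 2 * P a + (-1) ^ a := by
      rw [Finset.sum_congr rfl hpt, Finset.sum_add_distrib]
      congr 1
      · rw [Finset.sum_ite_mem, Finset.inter_eq_right.mpr hFsub, hPdef, Finset.mul_sum]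
      · rw [Finset.sum_ite_eq' (Finset.univ.erase (0 : ZMod p)) (-1 : ZMod p)
          (fun _ => (-1 : ZMod p) ^ a)]
        rw [if_pos (Finset.mem_erase.mpr ⟨hneg1ne, Finset.mem_univ _⟩)]
    have hTsplit2 : (∑ u ∈ Finset.univ.erase (0 : ZMod p),
        ((1 : ZMod p) - (u + 1) ^ q) * u ^ a) = Ck a := by
      have hexp : ∀ u ∈ Finset.univ.erase (0 : ZMod p),
          ((1 : ZMod p) - (u + 1) ^ q) * u ^ a = u ^ a - u ^ a * (u + 1) ^ q := by
        intro u _; ring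
      rw [Finset.sum_congr rfl hexp, Finset.sum_sub_distrib, hsum a,
        if_neg (by
          intro hd
          have := Nat.le_of_dvd (by omega) hd
          omega)]
      have hext : (∑ u ∈ Finset.univ.erase (0 : ZMod p), u ^ a * (u + 1) ^ q)
          = ∑ u : ZMod p, u ^ a * (u + 1) ^ q := by
        rw [← Finset.sum_erase_add Finset.univ _ (Finset.mem_univ (0 : ZMod p))]
        rw [zero_pow (by omega : a ≠ 0), zero_mul, add_zero]
      rw [hext, hbinsum a ha1 han]
      ring
    have := hTsplit.symm.trans hTsplit2
    linear_combination this
  -- STEP A : multiplier relation on power sums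
  have himgF : F.image (fun x => x ^ t') = F.image (fun x => g * x) := by
    apply Finset.coe_injective
    rw [Finset.coe_image, Finset.coe_image, hcoeF]
    exact himg
  have hinj1 : ∀ x ∈ F, ∀ y ∈ F, x ^ t' = y ^ t' → x = y := by
    intro x hx y hy hxy
    have hx0 : x ≠ 0 := ((hmemF x).mp hx).1
    have hy0 : y ≠ 0 := ((hmemF y).mp hy).1
    calc x = (x ^ t') ^ t'' := (hpowinv x hx0).symm
      _ = (y ^ t') ^ t'' := by rw [hxy]
      _ = y := hpowinv y hy0
  have hinj2 : ∀ x ∈ F, ∀ y ∈ F, g * x = g * y → x = y := by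
    intro x _ y _ hxy
    exact mul_left_cancel₀ hg0 hxy
  have stepA : ∀ k : ℕ, P ((k * t') % (p - 1)) = g ^ k * P k := by
    intro k
    calc P ((k * t') % (p - 1)) = ∑ x ∈ F, (x ^ t') ^ k := by
          simp only [hPdef]
          apply Finset.sum_congr rfl
          intro x hx
          have hx0 : x ≠ 0 := ((hmemF x).mp hx).1
          rw [← pow_mul, mul_comm t' k, ← hpow_mod x hx0 (k * t')]
      _ = ∑ y ∈ F.image (fun x => x ^ t'), y ^ k := (Finset.sum_image hinj1).symm
      _ = ∑ y ∈ F.image (fun x => g * x), y ^ k := by rw [himgF]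
      _ = ∑ x ∈ F, (g * x) ^ k := Finset.sum_image hinj2
      _ = g ^ k * P k := by
          simp only [hPdef]
          rw [Finset.mul_sum]
          apply Finset.sum_congr rfl
          intro x _
          rw [mul_pow]
  -- master equation
  have hE : ∀ k : ℕ, 1 ≤ k → k < (p - 1) →
      Ck ((k * t') % (p - 1)) - (-1) ^ k = g ^ k * (Ck k - (-1) ^ k) := by
    intro k hk1 hkn
    have s1 := stepA k
    have b1 := stepB ((k * t') % (p - 1)) (by
      have := hanz k hk1 hkn
      omega) (Nat.mod_lt _ hnpos)
    have b2 := stepB k hk1 hkn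
    have hpar : ((-1 : ZMod p)) ^ ((k * t') % (p - 1)) = (-1) ^ k := negpow _ _ (hparity k)
    rw [hpar] at b1
    linear_combination -b1 + g ^ k * b2 + 2 * s1
  -- binomial coefficients are nonzero mod p
  have hchooseNZ : ∀ j : ℕ, j ≤ q → ((q.choose j : ℕ) : ZMod p) ≠ 0 := by
    intro j hj hzero
    rw [ZMod.natCast_eq_zero_iff] at hzero
    have hdvd : q.choose j ∣ Nat.factorial q :=
      ⟨Nat.factorial j * Nat.factorial (q - j),
        by rw [← Nat.choose_mul_factorial_mul_factorial hj]; ring⟩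
    have hpf : p ∣ Nat.factorial q := hzero.trans hdvd
    have := (Nat.Prime.dvd_factorial hp).mp hpf
    omega
  -- case analysis for small k
  have caseA : ∀ k : ℕ, 1 ≤ k → k ≤ q - 1 →
      ((k * t') % (p - 1) ≤ q - 1 ∧ g ^ k = 1) ∨
      (q + 1 ≤ (k * t') % (p - 1) ∧ Ck ((k * t') % (p - 1)) = (-1) ^ k * (1 - g ^ k) ∧ g ^ k ≠ 1) := by
    intro k hk1 hk2
    have hkn : k < (p - 1) := by omega
    have hEk := hE k hk1 hkn
    have hCk0 : Ck k = 0 := by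
      simp only [hCkdef]
      rw [Nat.choose_eq_zero_of_lt (by omega : q < (p - 1) - k)]
      simp
    rw [hCk0] at hEk
    have hid : Ck ((k * t') % (p - 1)) = (-1) ^ k * (1 - g ^ k) := by linear_combination hEk
    have haz : 1 ≤ (k * t') % (p - 1) := by
      have := hanz k hk1 hkn
      omega
    have halt : (k * t') % (p - 1) < (p - 1) := Nat.mod_lt _ hnpos
    rcases Nat.lt_or_ge ((k * t') % (p - 1)) q with hlt | hge
    · left
      refine ⟨by omega, ?_⟩
      have hz : Ck ((k * t') % (p - 1)) = 0 := by
        simp only [hCkdef]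
        rw [Nat.choose_eq_zero_of_lt (by omega : q < (p - 1) - (k * t') % (p - 1))]
        simp
      rw [hz] at hid
      rcases mul_eq_zero.mp hid.symm with hc | hc
      · exact absurd hc (pow_ne_zero k hneg1ne)
      · have : g ^ k = 1 := by linear_combination -hc
        exact this
    · rcases Nat.eq_or_lt_of_le hge with heq | hgt
      · exfalso
        have hkeven : k % 2 = 0 := by
          have := hparity k
          omega
        have hpow1 : ((-1 : ZMod p)) ^ k = 1 := by
          rw [negpow k 0 (by omega), pow_zero]
        have hCkq : Ck ((k * t') % (p - 1)) = 1 := by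
          simp only [hCkdef]
          rw [← heq]
          rw [show (p - 1) - q = q by omega, Nat.choose_self]
          simp
        rw [hCkq, hpow1, one_mul] at hid
        have : g ^ k = 0 := by linear_combination hid
        exact pow_ne_zero k hg0 this
      · right
        refine ⟨by omega, hid, ?_⟩
        intro hone
        rw [hone] at hid
        have hz : Ck ((k * t') % (p - 1)) = 0 := by
          rw [hid]; ring
        have : ((q.choose ((p - 1) - (k * t') % (p - 1)) : ℕ) : ZMod p) ≠ 0 :=
          hchooseNZ _ (by omega)
        simp only [hCkdef] at hz
        exact this hz
  -- mod computation for the pairing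
  have hmod3h : ∀ k : ℕ, 1 ≤ k → k ≤ q - 1 → q + 1 ≤ (k * t') % (p - 1) →
      ((q - k) * t') % (p - 1) = 3 * q - (k * t') % (p - 1) := by
    intro k hk1 hk2 hge
    have haup : (k * t') % (p - 1) < (p - 1) := Nat.mod_lt _ hnpos
    obtain ⟨c, hc⟩ : ∃ c, t' = 2 * c + 1 := ⟨t' / 2, by omega⟩
    have hht : q * t' % (p - 1) = q := by
      have hqt : q * t' = q + (p - 1) * c := by rw [hc, hn2q]; ring
      rw [hqt, Nat.add_mul_mod_self_left, Nat.mod_eq_of_lt (by omega)]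
    have hsplit : (q - k) * t' + k * t' = q * t' := by
      rw [← Nat.add_mul]
      congr 1
      omega
    have h1 : ((q - k) * t') % (p - 1) + (k * t') % (p - 1) ≡ q [MOD (p - 1)] := by
      calc ((q - k) * t') % (p - 1) + (k * t') % (p - 1)
          ≡ (q - k) * t' + k * t' [MOD (p - 1)] :=
            Nat.ModEq.add (Nat.mod_modEq _ (p - 1)) (Nat.mod_modEq _ (p - 1))
        _ = q * t' := hsplit
        _ ≡ q [MOD (p - 1)] := by
            show (q * t') % (p - 1) = q % (p - 1)
            rw [hht, Nat.mod_eq_of_lt (by omega)]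
    have hrlt : ((q - k) * t') % (p - 1) < (p - 1) := Nat.mod_lt _ hnpos
    have h2 : (((q - k) * t') % (p - 1) + (k * t') % (p - 1)) % (p - 1) = q := by
      have := h1
      rw [Nat.ModEq] at this
      rw [this, Nat.mod_eq_of_lt (by omega)]
    have hd := Nat.div_add_mod (((q - k) * t') % (p - 1) + (k * t') % (p - 1)) (p - 1)
    rw [h2] at hd
    set d := (((q - k) * t') % (p - 1) + (k * t') % (p - 1)) / (p - 1) with hddef
    have hdlt : d < 2 := by
      rw [hddef]
      rw [Nat.div_lt_iff_lt_mul hnpos]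
      omega
    interval_cases d <;> omega
  -- the pairing : case (ii) forces g^(2k) = g^q
  have hpair : ∀ k : ℕ, 1 ≤ k → k ≤ q - 1 → q + 1 ≤ (k * t') % (p - 1) →
      Ck ((k * t') % (p - 1)) = (-1) ^ k * (1 - g ^ k) → g ^ (2 * k) = g ^ q := by
    intro k hk1 hk2 hge hid
    have haup : (k * t') % (p - 1) < (p - 1) := Nat.mod_lt _ hnpos
    have hqk1 : 1 ≤ q - k := by omega
    have hqk2 : q - k ≤ q - 1 := by omega
    have hmod := hmod3h k hk1 hk2 hge
    have hge' : q + 1 ≤ ((q - k) * t') % (p - 1) := by omega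
    rcases caseA (q - k) hqk1 hqk2 with ⟨hsm, _⟩ | ⟨_, hid', _⟩
    · omega
    · -- Ck at the paired index equals Ck at the original index
      have hCeq : Ck (((q - k) * t') % (p - 1)) = Ck ((k * t') % (p - 1)) := by
        simp only [hCkdef]
        rw [hmod]
        have e1 : (p - 1) - (3 * q - (k * t') % (p - 1)) = q - ((p - 1) - (k * t') % (p - 1)) := by omega
        rw [e1, Nat.choose_symm (show (p - 1) - (k * t') % (p - 1) ≤ q by omega)]
      have hpar' : ((-1 : ZMod p)) ^ (q - k) = (-1) ^ k := by
        apply negpow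
        omega
      rw [hCeq, hid, hpar'] at hid'
      have hcancel : (1 : ZMod p) - g ^ k = 1 - g ^ (q - k) :=
        mul_left_cancel₀ (pow_ne_zero k hneg1ne) hid'
      have hgk : g ^ k = g ^ (q - k) := by linear_combination -hcancel
      calc g ^ (2 * k) = g ^ k * g ^ k := by rw [two_mul, pow_add]
        _ = g ^ (q - k) * g ^ k := by rw [hgk]
        _ = g ^ q := by rw [← pow_add]; congr 1; omega
  -- conclude g = 1 or g = -1
  have hgpm : g = 1 ∨ g = -1 := by
    rcases caseA 1 le_rfl (by omega) with ⟨_, hg1⟩ | ⟨hge1, hid1, hne1⟩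
    · left; rwa [pow_one] at hg1
    · have e1 : g ^ (2 * 1) = g ^ q := hpair 1 le_rfl (by omega) hge1 hid1
      rcases caseA 2 (by omega) (by omega) with ⟨_, hg2⟩ | ⟨hge2, hid2, hne2⟩
      · right
        have hgg : g * g = 1 := by
          rw [← pow_two]
          exact hg2
        rcases mul_self_eq_one_iff.mp hgg with h1 | h1
        · exact absurd (show g ^ 1 = 1 by rw [pow_one, h1]) hne1
        · exact h1
      · exfalso
        have e2 : g ^ (2 * 2) = g ^ q := hpair 2 (by omega) (by omega) hge2 hid2
        have h42 : g ^ 2 * g ^ 2 = g ^ 2 * 1 := by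
          rw [mul_one, ← pow_add]
          calc g ^ (2 + 2) = g ^ (2 * 2) := by norm_num
            _ = g ^ q := e2
            _ = g ^ (2 * 1) := e1.symm
            _ = g ^ 2 := by norm_num
        exact hne2 (mul_left_cancel₀ (pow_ne_zero 2 hg0) h42)
  -- FINAL : case g = 1
  have hfinal : t' = 1 := by
    rcases hgpm with hg1 | hgneg
    · -- all small exponents stay small
      have hsmall : ∀ k : ℕ, 1 ≤ k → k ≤ q - 1 → (k * t') % (p - 1) ≤ q - 1 := by
        intro k hk1 hk2
        rcases caseA k hk1 hk2 with ⟨hle, _⟩ | ⟨_, _, hne⟩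
        · exact hle
        · exact absurd (by rw [hg1, one_pow]) hne
      have ht'small : t' ≤ q - 1 := by
        have := hsmall 1 le_rfl (by omega)
        rwa [one_mul, Nat.mod_eq_of_lt htlt] at this
      by_contra ht1
      have ht2 : 2 ≤ t' := by omega
      have hqd : q / t' ≤ q / 2 := Nat.div_le_div_left ht2 (by omega)
      have hk01 : 1 ≤ q / t' + 1 := Nat.le_add_left 1 _
      have hk02 : q / t' + 1 ≤ q - 1 := by
        have h2 : q / 2 + 1 ≤ q - 1 := by omega
        exact le_trans (Nat.add_le_add_right hqd 1) h2
      have hdm := Nat.div_add_mod q t'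
      have hrlt : q % t' < t' := Nat.mod_lt _ (by omega)
      have hmul : (q / t' + 1) * t' = t' * (q / t') + t' := by ring
      have hup : (q / t' + 1) * t' ≤ q + t' := by
        rw [hmul]
        refine Nat.add_le_add_right ?_ t'
        rw [mul_comm]
        exact Nat.div_mul_le_self q t'
      have hlow : q < (q / t' + 1) * t' := by
        rw [hmul]
        calc q = t' * (q / t') + q % t' := hdm.symm
          _ < t' * (q / t') + t' := Nat.add_lt_add_left hrlt _
      have hltn : (q / t' + 1) * t' < (p - 1) :=
        lt_of_le_of_lt hup (by omega : q + t' < (p - 1))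
      have hcon := hsmall (q / t' + 1) hk01 hk02
      rw [Nat.mod_eq_of_lt hltn] at hcon
      exact absurd (hlow.trans_le (hcon.trans (Nat.sub_le q 1))) (lt_irrefl q)
    · -- g = -1 : contradiction via the binomial sum
      exfalso
      -- the odd equation
      have hodd_eq : ∀ k : ℕ, k < (p - 1) → k % 2 = 1 →
          Ck ((k * t') % (p - 1)) + Ck k = -2 := by
        intro k hkn hk2
        have hk1 : 1 ≤ k := by omega
        have hEk := hE k hk1 hkn
        have hok : Odd k := Nat.odd_iff.mpr hk2
        have hgk : g ^ k = -1 := by rw [hgneg]; exact hok.neg_one_pow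
        have hmk : ((-1 : ZMod p)) ^ k = -1 := hok.neg_one_pow
        rw [hgk, hmk] at hEk
        linear_combination hEk
      -- the set of odd residues
      set K : Finset ℕ := (Finset.range q).image (fun i => 2 * i + 1) with hKdef
      have hmemK : ∀ x : ℕ, x ∈ K ↔ (x < (p - 1) ∧ x % 2 = 1) := by
        intro x
        rw [hKdef]
        simp only [Finset.mem_image, Finset.mem_range]
        constructor
        · rintro ⟨i, hi, rfl⟩
          omega
        · intro ⟨h1, h2⟩
          exact ⟨x / 2, by omega, by omega⟩
      have hcardK : K.card = q := by
        rw [hKdef, Finset.card_image_of_injective _ (fun a b hab => by omega),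
          Finset.card_range]
      -- cast facts
      have hncast : (((p - 1) : ℕ) : ZMod p) = -1 := by
        have hz : (((p - 1) : ℕ) : ZMod p) + 1 = 0 := by
          have h1 : (((p - 1) : ℕ) : ZMod p) + ((1 : ℕ) : ZMod p)
              = (((p - 1 + 1 : ℕ)) : ZMod p) := (Nat.cast_add _ _).symm
          rw [Nat.cast_one] at h1
          rw [h1, show p - 1 + 1 = p by omega, ZMod.natCast_self]
        linear_combination hz
      -- sum of the odd equations
      have hsum1 : (∑ k ∈ K, (Ck ((k * t') % (p - 1)) + Ck k)) = 1 := by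
        have hconst : (∑ k ∈ K, (Ck ((k * t') % (p - 1)) + Ck k)) = ∑ k ∈ K, (-2 : ZMod p) := by
          apply Finset.sum_congr rfl
          intro k hk
          have := (hmemK k).mp hk
          exact hodd_eq k this.1 this.2
        rw [hconst, Finset.sum_const, hcardK, nsmul_eq_mul]
        have h2q : ((2 * q : ℕ) : ZMod p) = -1 := by
          rw [show 2 * q = (p - 1) from hn2q.symm]
          exact hncast
        push_cast at h2q
        linear_combination -h2q
      -- reindexing : multiplication by t' permutes odd residues
      have hsum2 : (∑ k ∈ K, Ck ((k * t') % (p - 1))) = ∑ k ∈ K, Ck k := by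
        apply Finset.sum_nbij' (fun k => (k * t') % (p - 1)) (fun k => (k * t'') % (p - 1))
        · intro a ha
          rw [hmemK] at ha ⊢
          refine ⟨Nat.mod_lt _ hnpos, ?_⟩
          rw [hparity]
          exact ha.2
        · intro a ha
          rw [hmemK] at ha ⊢
          refine ⟨Nat.mod_lt _ hnpos, ?_⟩
          rw [hparity'']
          exact ha.2
        · intro a ha
          rw [hmemK] at ha
          exact hmodinv t' t'' hinv a ha.1
        · intro a ha
          rw [hmemK] at ha
          exact hmodinv t'' t' hinv' a ha.1
        · intro a _
          rfl
      -- reindexing : k ↦ (p - 1) - k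
      have hsum3 : (∑ k ∈ K, Ck k) = ∑ j ∈ K, ((q.choose j : ℕ) : ZMod p) := by
        apply Finset.sum_nbij' (fun k => (p - 1) - k) (fun j => (p - 1) - j)
        · intro a ha
          rw [hmemK] at ha ⊢
          omega
        · intro a ha
          rw [hmemK] at ha ⊢
          omega
        · intro a ha
          rw [hmemK] at ha
          omega
        · intro a ha
          rw [hmemK] at ha
          omega
        · intro a _
          simp only [hCkdef]
      -- restrict to j ≤ q
      have hsum4 : (∑ j ∈ K, ((q.choose j : ℕ) : ZMod p))
          = ∑ j ∈ (Finset.range (q + 1)).filter (fun j => j % 2 = 1),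
              ((q.choose j : ℕ) : ZMod p) := by
        symm
        apply Finset.sum_subset
        · intro j hj
          rw [Finset.mem_filter, Finset.mem_range] at hj
          rw [hmemK]
          omega
        · intro j hj hnj
          rw [hmemK] at hj
          rw [Finset.mem_filter, Finset.mem_range] at hnj
          have : q < j := by
            by_contra hle
            exact hnj ⟨by omega, hj.2⟩
          rw [Nat.choose_eq_zero_of_lt this]
          simp
      -- the odd binomial sum
      have hchoosesum : (2 : ZMod p) *
          (∑ j ∈ (Finset.range (q + 1)).filter (fun j => j % 2 = 1),
            ((q.choose j : ℕ) : ZMod p)) = 2 ^ q := by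
        have htot : (∑ j ∈ Finset.range (q + 1), ((q.choose j : ℕ) : ZMod p))
            = 2 ^ q := by
          rw [← Nat.cast_sum, Nat.sum_range_choose]
          push_cast
          ring
        have halt : (∑ j ∈ Finset.range (q + 1),
            ((-1 : ZMod p)) ^ j * ((q.choose j : ℕ) : ZMod p)) = 0 := by
          have hZ := Int.alternating_sum_range_choose_of_ne (n := q) (by omega)
          calc (∑ j ∈ Finset.range (q + 1), ((-1 : ZMod p)) ^ j * ((q.choose j : ℕ) : ZMod p))
              = (((∑ j ∈ Finset.range (q + 1), (-1 : ℤ) ^ j * (q.choose j) : ℤ)) : ZMod p) := by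
                push_cast
                rfl
            _ = ((0 : ℤ) : ZMod p) := by rw [hZ]
            _ = 0 := by simp
        have hsplit : (∑ j ∈ Finset.range (q + 1),
            ((1 : ZMod p) - (-1) ^ j) * ((q.choose j : ℕ) : ZMod p))
            = ∑ j ∈ Finset.range (q + 1),
              (if j % 2 = 1 then 2 * ((q.choose j : ℕ) : ZMod p) else 0) := by
          apply Finset.sum_congr rfl
          intro j _
          rcases Nat.mod_two_eq_zero_or_one j with h2 | h2
          · rw [if_neg (by omega)]
            rw [negpow j 0 (by omega), pow_zero]
            ring
          · rw [if_pos h2]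
            rw [negpow j 1 (by omega), pow_one]
            ring
        have h1 : (∑ j ∈ Finset.range (q + 1),
            ((1 : ZMod p) - (-1) ^ j) * ((q.choose j : ℕ) : ZMod p)) = 2 ^ q := by
          have : (∑ j ∈ Finset.range (q + 1),
              ((1 : ZMod p) - (-1) ^ j) * ((q.choose j : ℕ) : ZMod p))
              = (∑ j ∈ Finset.range (q + 1), ((q.choose j : ℕ) : ZMod p))
                - ∑ j ∈ Finset.range (q + 1),
                  ((-1 : ZMod p)) ^ j * ((q.choose j : ℕ) : ZMod p) := by
            rw [← Finset.sum_sub_distrib]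
            apply Finset.sum_congr rfl
            intro j _
            ring
          rw [this, htot, halt, sub_zero]
        rw [← h1, hsplit, ← Finset.sum_filter, Finset.mul_sum]
      -- 2 is not a square mod p
      have hmodd : m % 2 = 1 := by
        rcases Nat.mod_two_eq_zero_or_one m with h2 | h2
        · exfalso
          have h2m : 2 ∣ m := Nat.dvd_of_mod_eq_zero h2
          have h26 : (2 : ℕ) ∣ 6 := by norm_num
          have := Nat.dvd_gcd h2m h26
          rw [hm6] at this
          omega
        · exact h2
      have hp8 : p % 8 = 5 := by omega
      have h2nsq : ¬ IsSquare (2 : ZMod p) := by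
        rw [ZMod.exists_sq_eq_two_iff (by omega : p ≠ 2)]
        omega
      have h2ne0 : (2 : ZMod p) ≠ 0 := by
        intro hz
        have : ((2 : ℕ) : ZMod p) = 0 := by push_cast; exact hz
        rw [ZMod.natCast_eq_zero_iff] at this
        have := Nat.le_of_dvd (by norm_num) this
        omega
      have h2pow : (2 : ZMod p) ^ q = -1 := hEuler2 2 h2ne0 h2nsq
      -- assemble the contradiction
      have hfin : (1 : ZMod p) = -1 := by
        calc (1 : ZMod p) = ∑ k ∈ K, (Ck ((k * t') % (p - 1)) + Ck k) := hsum1.symm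
          _ = 2 * ∑ j ∈ (Finset.range (q + 1)).filter (fun j => j % 2 = 1),
                ((q.choose j : ℕ) : ZMod p) := by
              rw [Finset.sum_add_distrib, hsum2, hsum3, hsum4, two_mul]
          _ = 2 ^ q := hchoosesum
          _ = -1 := h2pow
      have h20 : (2 : ZMod p) = 0 := by linear_combination hfin
      exact h2ne0 h20
  -- conclude t = 1
  have hval : (t : ZMod (p - 1)) = 1 := (ZMod.val_eq_one h1n _).mp hfinal
  exact Units.ext (by rw [hval, Units.val_one])
end

section
/- Let p be a prime with p ≡ 1 (mod 4), let S₁ = {j ∈ (ℤ/(p-1)ℤ)^* : the least positive residue of j is less than (p−1)/2}, and let a be the residue class of (p−1)/2 − 1 in ℤ/(p-1)ℤ (which is a self-inverse unit). Then a·S₁ = S₁. -/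
/-- For a prime `p ≡ 1 (mod 4)`, the residue class `a` of
`(p-1)/2 - 1` mod `p-1` (a self-inverse unit) satisfies `a·S₁ = S₁`, where
`S₁ = {j ∈ (ℤ/(p-1)ℤ)^* : least positive residue of j < (p-1)/2}`. -/
theorem half_sub_one_stabilizes_S1
    (p : ℕ) (hp : p.Prime) (hp4 : p % 4 = 1)
    (S₁ : Set (ZMod (p - 1))ˣ)
    (hS₁ : S₁ = {j : (ZMod (p - 1))ˣ | ((j : ZMod (p - 1))).val < (p - 1) / 2})
    (a : (ZMod (p - 1))ˣ)
    (ha : (a : ZMod (p - 1)) = (((p - 1) / 2 - 1 : ℕ) : ZMod (p - 1))) :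
    (fun j => a * j) '' S₁ = S₁ := by
  have hp2 := hp.two_le
  have hp5 : 5 ≤ p := by omega
  have hn4 : (p - 1) % 4 = 0 := by omega
  have hnge : 4 ≤ p - 1 := by omega
  haveI : NeZero (p - 1) := ⟨by omega⟩
  -- a is self-inverse
  have haa : a * a = 1 := by
    obtain ⟨k, hk⟩ : ∃ k, p - 1 = 4 * k := ⟨(p - 1) / 4, by omega⟩
    have hk1 : 1 ≤ k := by omega
    have hh : (p - 1) / 2 - 1 = 2 * k - 1 := by omega
    have hnat : (2 * k - 1) * (2 * k - 1) = (p - 1) * (k - 1) + 1 := by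
      zify [show 1 ≤ 2 * k by omega, hk1]
      rw [hk]; push_cast; ring
    ext
    rw [Units.val_mul, ha, hh, ← Nat.cast_mul, hnat, Nat.cast_add, Nat.cast_mul,
      ZMod.natCast_self, zero_mul, zero_add, Nat.cast_one, Units.val_one]
  -- main claim
  have hmain : ∀ j, j ∈ S₁ → a * j ∈ S₁ := by
    intro j hj
    rw [hS₁] at hj ⊢
    simp only [Set.mem_setOf_eq] at hj ⊢
    set v := ((j : ZMod (p - 1))).val with hv
    have hco : Nat.Coprime v (p - 1) := ZMod.val_coe_unit_coprime j
    have hgcd : Nat.gcd v (p - 1) = 1 := hco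
    have hvodd : v % 2 = 1 := by
      by_contra hcon
      have hd : 2 ∣ v := by omega
      have h2 : (2 : ℕ) ∣ Nat.gcd v (p - 1) := Nat.dvd_gcd hd (by omega)
      omega
    have hvpos : 0 < v := by
      rcases Nat.eq_zero_or_pos v with h0 | h
      · exfalso; rw [h0] at hgcd; simp at hgcd; omega
      · exact h
    obtain ⟨t, ht⟩ : ∃ t, v = 2 * t + 1 := ⟨v / 2, by omega⟩
    obtain ⟨k, hk⟩ : ∃ k, p - 1 = 4 * k := ⟨(p - 1) / 4, by omega⟩
    have h2k : (p - 1) / 2 = 2 * k := by omega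
    have key : ((p - 1) / 2 - 1) * v = (p - 1) * t + ((p - 1) / 2 - v) := by
      have hvz : (v : ℤ) = 2 * t + 1 := by exact_mod_cast congrArg (Nat.cast : ℕ → ℤ) ht
      rw [h2k, hk]
      zify [show 1 ≤ 2 * k by omega, show v ≤ 2 * k by omega]
      linear_combination 2 * (k : ℤ) * hvz
    have hjv : (j : ZMod (p - 1)) = (v : ZMod (p - 1)) := by
      rw [hv, ZMod.natCast_val, ZMod.cast_id]
    have h1 : ((a * j : (ZMod (p - 1))ˣ) : ZMod (p - 1)) = (((p - 1) / 2 - v : ℕ) : ZMod (p - 1)) := by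
      rw [Units.val_mul, ha, hjv, ← Nat.cast_mul, key, Nat.cast_add, Nat.cast_mul,
        ZMod.natCast_self, zero_mul, zero_add]
    rw [h1, ZMod.val_natCast_of_lt (by omega)]
    omega
  ext j
  constructor
  · rintro ⟨i, hi, rfl⟩
    exact hmain i hi
  · intro hj
    exact ⟨a * j, hmain _ hj, by simp [← mul_assoc, haa]⟩
end
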